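/- Let (W, S) be a Coxeter system, let J, K ⊆ S, and let w̄ ∈ ᴶW ∩ Wᴷ. Set K' = K ∩ (w̄⁻¹ J w̄) and J' = J ∩ (w̄ K w̄⁻¹). If w ∈ w̄ · W_K, then the unique decomposition w = u · w̄ · v with u ∈ W_J and v ∈ W_K ∩ ᴷ'W (given by Howlett's lemma) in fact satisfies u ∈ W_{J'}. -/

import Mathlib

open CoxeterSystem

variable {B W : Type*} [Group W] {M : CoxeterMatrix B}

/-- The strong Bruhat order on a Coxeter group: the reflexive-transitive closure of the
relation relating `a` to `a * t` where `t` is a reflection and the length increases. -/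
def bruhatLE (cs : CoxeterSystem M W) (u v : W) : Prop :=
  Relation.ReflTransGen
    (fun a b => ∃ t : W, cs.IsReflection t ∧ b = a * t ∧ cs.length a < cs.length b) u v

/-- `ᴶW`: the set of `w` with `ℓ(s w) > ℓ(w)` for all `s ∈ J`, i.e. the minimal length
representatives of the cosets `W_J \ W`. Here `J` is a set of simple reflections of `W`. -/
def minLeft (cs : CoxeterSystem M W) (J : Set W) : Set W :=
  {w | ∀ s ∈ J, cs.length w < cs.length (s * w)}

/-- `Wᴶ`: the set of `w` with `ℓ(w s) > ℓ(w)` for all `s ∈ J`, i.e. the minimal length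
representatives of the cosets `W / W_J`. -/
def minRight (cs : CoxeterSystem M W) (J : Set W) : Set W :=
  {w | ∀ s ∈ J, cs.length w < cs.length (w * s)}

/-!
Writing `w = w̄ b` with `b ∈ W_K` gives `u = w̄ (b v⁻¹) w̄⁻¹`, so it suffices to prove Kilmoyer's
inclusion `W_J ∩ w̄ W_K w̄⁻¹ ⊆ W_{J'}`. Lengths add in `w̄ y` for `y ∈ W_K` and in `y w̄` for
`y ∈ W_J`. Take `x ∈ W_K` with `u = w̄ x w̄⁻¹ ∈ W_J` and a right descent `s ∈ K` of `x`. Then `s`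
shortens `u w̄ = w̄ x`, so by the exchange property it deletes a letter of `u` (deleting one of `w̄`
would make `s` a descent of `w̄`). Hence `w̄ s w̄⁻¹ ∈ W_J`; by additivity it has length one, so it
is a simple reflection in `J'`, and induction on `ℓ(x)` concludes.

The strong exchange property comes from the action of `W` on `W × ZMod 2` in which `w` sends
`(t, ε)` to `(w t w⁻¹, ε + η(w, t))`, `η(w, t)` being the parity of the occurrences of `t` in the
right inversion sequence of any word for `w`.
-/

theorem mul_mul_inv_eq_iff_eq_inv_mul_mul {G : Type*} [Group G] {a t x : G} :
    a * t * a⁻¹ = x ↔ t = a⁻¹ * x * a := by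
  constructor <;> rintro rfl <;> group

namespace CoxeterSystem

variable (cs : CoxeterSystem M W)

local prefix:100 "s " => cs.simple
local prefix:100 "π " => cs.wordProd
local prefix:100 "ℓ " => cs.length
local prefix:100 "ris " => cs.rightInvSeq

section ReflectionRepresentation

variable [DecidableEq W]

/-- The involution `π_{sᵢ}` of Björner–Brenti, §1.4. -/
def simplePerm (i : B) : Equiv.Perm (W × ZMod 2) :=
  Function.Involutive.toPerm (fun p => (s i * p.1 * s i, p.2 + if p.1 = s i then 1 else 0))
    fun p => by
      have hinvol : s i * (s i * p.1 * s i) * s i = p.1 := by simp [mul_assoc]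
      have hfix : s i * p.1 * s i = s i ↔ p.1 = s i := by
        constructor
        · intro h; rw [← hinvol, h, simple_mul_simple_self, one_mul]
        · rintro h; rw [h, simple_mul_simple_self, one_mul]
      ext
      · exact hinvol
      · simp only [hfix, add_assoc]
        split_ifs <;> simp [CharTwo.add_self_eq_zero]

theorem simplePerm_apply (i : B) (t : W) (ε : ZMod 2) :
    cs.simplePerm i (t, ε) = (s i * t * s i, ε + if t = s i then 1 else 0) := rfl

theorem simplePerm_mul_pow_apply (i j : B) (k : ℕ) (t : W) (ε : ZMod 2) :
    ((cs.simplePerm i * cs.simplePerm j) ^ k) (t, ε) =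
      ((s i * s j) ^ k * t * ((s i * s j) ^ k)⁻¹,
        ε + ∑ r ∈ Finset.range (2 * k), if t = s j * (s i * s j) ^ r then 1 else 0) := by
  induction k generalizing ε with
  | zero => simp
  | succ k ih =>
    set p := s i * s j
    -- `sⱼ` inverts `p`, so `p⁻ᵏ sⱼ pᵏ = sⱼ p²ᵏ`
    have hshift (r : ℕ) : (p ^ k)⁻¹ * (s j * p ^ r) * p ^ k = s j * p ^ (2 * k + r) := by
      have hinv : s j * p ^ k * s j = (p ^ k)⁻¹ := by
        have hp : s j * p * (s j)⁻¹ = p⁻¹ := by simp [p, mul_assoc]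
        rw [← inv_pow, ← hp, conj_pow, inv_simple]
      rw [← hinv]
      simp only [mul_assoc, simple_mul_simple_cancel_left, ← pow_add]
      ring_nf
    rw [pow_succ', Equiv.Perm.mul_apply, ih, Equiv.Perm.mul_apply, simplePerm_apply,
      simplePerm_apply]
    have h0 : p ^ k * t * (p ^ k)⁻¹ = s j ↔ t = s j * p ^ (2 * k) := by
      rw [mul_mul_inv_eq_iff_eq_inv_mul_mul, ← add_zero (2 * k), ← hshift 0, pow_zero, mul_one]
    have h1 : s j * (p ^ k * t * (p ^ k)⁻¹) * s j = s i ↔ t = s j * p ^ (2 * k + 1) := by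
      have hsj : s j * (p ^ k * t * (p ^ k)⁻¹) * s j = (s j * p ^ k) * t * (s j * p ^ k)⁻¹ := by
        rw [mul_inv_rev, inv_simple]; group
      rw [hsj, mul_mul_inv_eq_iff_eq_inv_mul_mul, ← hshift 1, pow_one, mul_inv_rev, inv_simple]
      simp only [p, mul_assoc]
    simp only [h0, h1, Prod.mk.injEq, mul_add, mul_one, Finset.sum_range_succ, add_assoc,
      and_true]
    simp only [p, pow_succ', mul_inv_rev, inv_simple, mul_assoc]

theorem isLiftable_simplePerm : M.IsLiftable cs.simplePerm := by
  intro i j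
  ext ⟨t, ε⟩ : 1
  rw [simplePerm_mul_pow_apply, simple_mul_simple_pow, two_mul, Finset.sum_range_add]
  simp only [pow_add, simple_mul_simple_pow, one_mul, CharTwo.add_self_eq_zero, inv_one, mul_one,
    add_zero, Equiv.Perm.one_apply]

def reflRep : W →* Equiv.Perm (W × ZMod 2) := cs.lift ⟨cs.simplePerm, cs.isLiftable_simplePerm⟩

theorem reflRep_wordProd (ω : List B) (t : W) (ε : ZMod 2) :
    cs.reflRep (π ω) (t, ε) = (π ω * t * (π ω)⁻¹, ε + (ris ω).count t) := by
  induction ω generalizing ε with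
  | nil => simp
  | cons i ω ih =>
    rw [wordProd_cons, map_mul, Equiv.Perm.mul_apply, ih, reflRep, lift_apply_simple,
      simplePerm_apply, rightInvSeq, List.count_cons]
    simp only [mul_mul_inv_eq_iff_eq_inv_mul_mul, beq_iff_eq, eq_comm (a := t)]
    simp [mul_assoc, add_assoc]

def inversionParity (w t : W) : ZMod 2 := (cs.reflRep w (t, 0)).2

theorem reflRep_apply (w t : W) (ε : ZMod 2) :
    cs.reflRep w (t, ε) = (w * t * w⁻¹, ε + cs.inversionParity w t) := by
  obtain ⟨ω, -, rfl⟩ := cs.exists_isReduced w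
  simp [inversionParity, reflRep_wordProd]

theorem inversionParity_wordProd (ω : List B) (t : W) :
    cs.inversionParity (π ω) t = (ris ω).count t := by
  simp [inversionParity, reflRep_wordProd]

theorem inversionParity_mul (w w' t : W) :
    cs.inversionParity (w * w') t =
      cs.inversionParity w' t + cs.inversionParity w (w' * t * w'⁻¹) := by
  change (cs.reflRep (w * w') (t, 0)).2 = _
  rw [map_mul, Equiv.Perm.mul_apply, reflRep_apply, reflRep_apply, zero_add]

theorem inversionParity_one (t : W) : cs.inversionParity 1 t = 0 := by
  simp [inversionParity]

variable {cs} in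
theorem IsReflection.inversionParity_self {t : W} (ht : cs.IsReflection t) :
    cs.inversionParity t t = 1 := by
  obtain ⟨u, i, rfl⟩ := ht
  set t := u * s i * u⁻¹
  have hsimple : cs.inversionParity (s i) (s i) = 1 := by
    simpa using cs.inversionParity_wordProd [i] (s i)
  have h1 := cs.inversionParity_mul u (s i * u⁻¹) t
  have h2 := cs.inversionParity_mul (s i) u⁻¹ t
  have h3 := cs.inversionParity_mul u u⁻¹ t
  rw [show u * (s i * u⁻¹) = t by simp only [t]; group,
    show s i * u⁻¹ * t * (s i * u⁻¹)⁻¹ = s i by simp only [t]; group] at h1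
  rw [show u⁻¹ * t * u⁻¹⁻¹ = s i by simp only [t]; group] at h2 h3
  rw [mul_inv_cancel, inversionParity_one] at h3
  rw [h1, h2, hsimple]
  linear_combination -h3

theorem mem_rightInvSeq_of_inversionParity_ne_zero {ω : List B} {t : W}
    (h : cs.inversionParity (π ω) t ≠ 0) : t ∈ ris ω := by
  rw [inversionParity_wordProd] at h
  exact List.count_pos_iff.mp (Nat.pos_of_ne_zero fun h0 => h (by rw [h0, Nat.cast_zero]))

theorem length_mul_lt_of_inversionParity_ne_zero {w t : W} (h : cs.inversionParity w t ≠ 0) :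
    ℓ (w * t) < ℓ w := by
  obtain ⟨ω, hω, rfl⟩ := cs.exists_isReduced w
  exact (cs.isRightInversion_of_mem_rightInvSeq hω
    (cs.mem_rightInvSeq_of_inversionParity_ne_zero h)).2

theorem inversionParity_ne_zero_of_length_mul_lt {w t : W} (ht : cs.IsReflection t)
    (h : ℓ (w * t) < ℓ w) : cs.inversionParity w t ≠ 0 := by
  intro h0
  have hwt : cs.inversionParity (w * t) t ≠ 0 := by
    rw [inversionParity_mul, ht.inversionParity_self, mul_inv_cancel_right, h0, add_zero]
    exact one_ne_zero
  have := cs.length_mul_lt_of_inversionParity_ne_zero hwt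
  rw [mul_assoc, ht.mul_self, mul_one] at this
  omega

end ReflectionRepresentation

/-- The strong exchange property. -/
theorem exists_eraseIdx_of_length_mul_lt {t : W} (ht : cs.IsReflection t) (ω : List B)
    (h : ℓ (π ω * t) < ℓ (π ω)) : ∃ j < ω.length, π ω * t = π (ω.eraseIdx j) := by
  classical
  obtain ⟨j, hj, rfl⟩ := List.getElem_of_mem (cs.mem_rightInvSeq_of_inversionParity_ne_zero
    (cs.inversionParity_ne_zero_of_length_mul_lt ht h))
  refine ⟨j, by simpa using hj, ?_⟩
  rw [← List.getD_eq_getElem _ 1, wordProd_mul_getD_rightInvSeq]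

theorem exists_eraseIdx_append_of_length_mul_lt {t : W} (ht : cs.IsReflection t)
    (ω₁ ω₂ : List B) (h : ℓ (π ω₁ * π ω₂ * t) < ℓ (π ω₁ * π ω₂)) :
    (∃ j < ω₁.length, π ω₁ * π ω₂ * t = π (ω₁.eraseIdx j) * π ω₂) ∨
      ∃ j < ω₂.length, π ω₁ * π ω₂ * t = π ω₁ * π (ω₂.eraseIdx j) := by
  rw [← wordProd_append] at h ⊢
  obtain ⟨j, hj, he⟩ := cs.exists_eraseIdx_of_length_mul_lt ht _ h
  rw [he]
  rcases lt_or_ge j ω₁.length with hj₁ | hj₁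
  · exact .inl ⟨j, hj₁, by rw [List.eraseIdx_append_of_lt_length hj₁, wordProd_append]⟩
  · refine .inr ⟨j - ω₁.length, by simp only [List.length_append] at hj; omega, ?_⟩
    rw [List.eraseIdx_append_of_length_le hj₁, wordProd_append]

variable {cs} in
theorem IsReduced.length_wordProd_eraseIdx_lt {ω : List B}
    (hω : cs.IsReduced ω) {j : ℕ} (hj : j < ω.length) : ℓ (π (ω.eraseIdx j)) < ℓ (π ω) :=
  calc ℓ (π (ω.eraseIdx j)) ≤ (ω.eraseIdx j).length := cs.length_wordProd_le _
    _ < ω.length := by rw [List.length_eraseIdx_of_lt hj]; omega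
    _ = ℓ (π ω) := hω.symm

section Parabolic

variable {K : Set W}

theorem wordProd_mem_closure {ω : List B} (h : ∀ i ∈ ω, s i ∈ K) : π ω ∈ Subgroup.closure K := by
  refine (Subgroup.closure K).list_prod_mem fun x hx => ?_
  obtain ⟨i, hi, rfl⟩ := List.mem_map.mp hx
  exact Subgroup.subset_closure (h i hi)

theorem exists_word_of_mem_closure (hK : K ⊆ Set.range cs.simple) {x : W}
    (hx : x ∈ Subgroup.closure K) : ∃ ω : List B, (∀ i ∈ ω, s i ∈ K) ∧ π ω = x := by
  induction hx using Subgroup.closure_induction with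
  | mem x hx =>
    obtain ⟨i, rfl⟩ := hK hx
    exact ⟨[i], by simpa using hx, wordProd_singleton cs i⟩
  | one => exact ⟨[], by simp, wordProd_nil cs⟩
  | mul x y _ _ hx hy =>
    obtain ⟨ω₁, hω₁, rfl⟩ := hx
    obtain ⟨ω₂, hω₂, rfl⟩ := hy
    exact ⟨ω₁ ++ ω₂, by simpa [or_imp, forall_and] using ⟨hω₁, hω₂⟩, wordProd_append cs ω₁ ω₂⟩
  | inv x _ hx =>
    obtain ⟨ω, hω, rfl⟩ := hx
    exact ⟨ω.reverse, by simpa using hω, wordProd_reverse cs ω⟩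

theorem exists_isReduced_sublist (ω : List B) :
    ∃ κ : List B, κ.Sublist ω ∧ cs.IsReduced κ ∧ π κ = π ω := by
  induction ω using List.reverseRecOn with
  | nil => exact ⟨[], .slnil, by simp [IsReduced], rfl⟩
  | append_singleton ω i ih =>
    obtain ⟨κ, hsub, hred, hprod⟩ := ih
    rcases cs.length_mul_simple (π κ) i with h | h
    · refine ⟨κ ++ [i], hsub.append (.refl _), ?_, by rw [wordProd_append, wordProd_append, hprod]⟩
      rw [IsReduced, wordProd_append, wordProd_singleton, h, hred, List.length_append,
        List.length_singleton]
    · obtain ⟨j, hj, he⟩ :=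
        cs.exists_eraseIdx_of_length_mul_lt (cs.isReflection_simple i) κ (by omega)
      refine ⟨κ.eraseIdx j, ((κ.eraseIdx_sublist j).trans hsub).trans (ω.sublist_append_left _),
        ?_, ?_⟩
      · rw [IsReduced, ← he, List.length_eraseIdx_of_lt hj, ← hred]
        omega
      · rw [← he, wordProd_append, wordProd_singleton, hprod]

theorem exists_isReduced_of_mem_closure (hK : K ⊆ Set.range cs.simple) {x : W}
    (hx : x ∈ Subgroup.closure K) :
    ∃ ω : List B, cs.IsReduced ω ∧ (∀ i ∈ ω, s i ∈ K) ∧ π ω = x := by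
  obtain ⟨ω, hωK, rfl⟩ := cs.exists_word_of_mem_closure hK hx
  obtain ⟨κ, hsub, hred, hprod⟩ := cs.exists_isReduced_sublist ω
  exact ⟨κ, hred, fun i hi => hωK i (hsub.subset hi), hprod⟩

theorem mem_of_mem_closure_of_length_eq_one (hK : K ⊆ Set.range cs.simple) {x : W}
    (hx : x ∈ Subgroup.closure K) (h : ℓ x = 1) : x ∈ K := by
  obtain ⟨ω, hred, hωK, rfl⟩ := cs.exists_isReduced_of_mem_closure hK hx
  obtain ⟨i, rfl⟩ := List.length_eq_one_iff.mp (hred.symm.trans h)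
  simpa using hωK i (List.mem_singleton_self i)

theorem closure_induction_mul_simple (hK : K ⊆ Set.range cs.simple) {p : W → Prop} (one : p 1)
    (mul_simple : ∀ x ∈ Subgroup.closure K, ∀ i, s i ∈ K → ℓ x < ℓ (x * s i) → p x →
      p (x * s i))
    {x : W} (hx : x ∈ Subgroup.closure K) : p x := by
  obtain ⟨ω, hred, hωK, rfl⟩ := cs.exists_isReduced_of_mem_closure hK hx
  induction ω using List.reverseRecOn with
  | nil => simpa using one
  | append_singleton ω i ih =>
    have hred' : cs.IsReduced ω := by simpa using hred.take ω.length
    have hωK' : ∀ j ∈ ω, s j ∈ K := fun j hj => hωK j (List.mem_append_left _ hj)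
    have hlt : ℓ (π ω) < ℓ (π ω * s i) := by
      rw [← wordProd_singleton, ← wordProd_append, hred.eq, hred'.eq, List.length_append]
      exact Nat.lt_succ_self _
    rw [wordProd_append, wordProd_singleton]
    exact mul_simple _ (cs.wordProd_mem_closure hωK') i (hωK i (by simp)) hlt
      (ih hred' hωK' (cs.wordProd_mem_closure hωK'))

theorem exists_length_mul_simple_lt_of_mem_closure (hK : K ⊆ Set.range cs.simple) {x : W}
    (hx : x ∈ Subgroup.closure K) (hne : x ≠ 1) : ∃ i, s i ∈ K ∧ ℓ (x * s i) < ℓ x := by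
  refine cs.closure_induction_mul_simple hK (p := fun x => x ≠ 1 → ∃ i, s i ∈ K ∧ ℓ (x * s i) < ℓ x)
    (fun h => absurd rfl h) (fun x _ i hi hlt _ _ => ⟨i, hi, ?_⟩) hx hne
  rwa [simple_mul_simple_cancel_right]

end Parabolic

section MinimalCosetRepresentatives

variable {K : Set W}

theorem length_mul_of_forall_length_le_mul (hK : K ⊆ Set.range cs.simple) {w : W}
    (hmin : ∀ z ∈ Subgroup.closure K, ℓ w ≤ ℓ (w * z)) {x : W} (hx : x ∈ Subgroup.closure K) :
    ℓ (w * x) = ℓ w + ℓ x := by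
  refine cs.closure_induction_mul_simple hK (p := fun x => ℓ (w * x) = ℓ w + ℓ x) (by simp)
    (fun x hx i hi hlt ih => ?_) hx
  have hxi : ℓ (x * s i) = ℓ x + 1 := by
    rcases cs.length_mul_simple x i with h | h <;> omega
  rcases cs.length_mul_simple (w * x) i with h | h
  · rw [← mul_assoc, h, ih, hxi, add_assoc]
  exfalso
  obtain ⟨ω₀, hω₀, rfl⟩ := cs.exists_isReduced w
  obtain ⟨ω, hω, rfl⟩ := cs.exists_isReduced x
  rcases cs.exists_eraseIdx_append_of_length_mul_lt (cs.isReflection_simple i) ω₀ ω (by omega)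
    with ⟨j, hj, he⟩ | ⟨j, hj, he⟩
  · -- deleting a letter of `w` stays in the coset `w W_K`
    have hconj : π ω * s i * (π ω)⁻¹ ∈ Subgroup.closure K :=
      mul_mem (mul_mem hx (Subgroup.subset_closure hi)) (inv_mem hx)
    have hle := hmin _ hconj
    rw [show π ω₀ * (π ω * s i * (π ω)⁻¹) = π (ω₀.eraseIdx j) by
      rw [← mul_assoc, ← mul_assoc, he, mul_inv_cancel_right]] at hle
    exact absurd hle (not_le.mpr (hω₀.length_wordProd_eraseIdx_lt hj))
  · rw [mul_assoc, mul_right_inj] at he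
    have := hω.length_wordProd_eraseIdx_lt hj
    rw [← he] at this
    omega

theorem forall_length_le_mul_of_mem_minRight (hK : K ⊆ Set.range cs.simple) {w : W}
    (hw : w ∈ minRight cs K) : ∀ z ∈ Subgroup.closure K, ℓ w ≤ ℓ (w * z) := by
  obtain ⟨z₀, hz₀, hmin⟩ : ∃ z₀ ∈ Subgroup.closure K, ∀ z ∈ Subgroup.closure K,
      ℓ (w * z₀) ≤ ℓ (w * z) :=
    ⟨_, Function.argminOn_mem _ _ ⟨1, one_mem _⟩,
      fun z hz => Function.argminOn_le (fun z => ℓ (w * z)) (Subgroup.closure K : Set W) hz⟩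
  have hmin' : ∀ z ∈ Subgroup.closure K, ℓ (w * z₀) ≤ ℓ (w * z₀ * z) := fun z hz => by
    simpa [mul_assoc] using hmin (z₀ * z) (mul_mem hz₀ hz)
  obtain rfl : z₀ = 1 := by
    by_contra hne
    obtain ⟨i, hi, hlt⟩ :=
      cs.exists_length_mul_simple_lt_of_mem_closure hK (inv_mem hz₀) (inv_ne_one.mpr hne)
    have h₁ := cs.length_mul_of_forall_length_le_mul hK hmin' (inv_mem hz₀)
    have h₂ := cs.length_mul_of_forall_length_le_mul hK hmin'
      (mul_mem (inv_mem hz₀) (Subgroup.subset_closure hi))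
    simp only [mul_assoc, mul_inv_cancel_left, mul_inv_cancel, mul_one] at h₁ h₂
    have := hw (s i) hi
    omega
  simpa using hmin

theorem length_mul_of_mem_minRight (hK : K ⊆ Set.range cs.simple) {w x : W}
    (hw : w ∈ minRight cs K) (hx : x ∈ Subgroup.closure K) : ℓ (w * x) = ℓ w + ℓ x :=
  cs.length_mul_of_forall_length_le_mul hK (cs.forall_length_le_mul_of_mem_minRight hK hw) hx

theorem length_mul_of_mem_minLeft (hK : K ⊆ Set.range cs.simple) {w x : W}
    (hw : w ∈ minLeft cs K) (hx : x ∈ Subgroup.closure K) : ℓ (x * w) = ℓ x + ℓ w := by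
  have hw' : w⁻¹ ∈ minRight cs K := by
    intro t ht
    obtain ⟨i, rfl⟩ := hK ht
    simpa [← length_inv cs (s i * w)] using hw _ ht
  simpa [← mul_inv_rev, add_comm] using cs.length_mul_of_mem_minRight hK hw' (inv_mem hx)

end MinimalCosetRepresentatives

section Kilmoyer

variable {J K : Set W}

theorem conj_simple_mem_of_length_mul_simple_lt (hJ : J ⊆ Set.range cs.simple) {wb : W}
    (hwb : wb ∈ minLeft cs J ∩ minRight cs K) {k : B} (hk : s k ∈ K) {u : W}
    (hu : u ∈ Subgroup.closure J) (h : ℓ (u * wb * s k) < ℓ (u * wb)) :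
    wb * s k * wb⁻¹ ∈ J := by
  obtain ⟨κ, -, hκJ, rfl⟩ := cs.exists_isReduced_of_mem_closure hJ hu
  obtain ⟨ω, hω, rfl⟩ := cs.exists_isReduced wb
  have hωk : ℓ (π ω) < ℓ (π ω * s k) := hwb.2 _ hk
  rcases cs.exists_eraseIdx_append_of_length_mul_lt (cs.isReflection_simple k) κ ω h
    with ⟨j, -, he⟩ | ⟨j, hj, he⟩
  · have htJ : π ω * s k * (π ω)⁻¹ ∈ Subgroup.closure J := by
      have ht : π ω * s k * (π ω)⁻¹ = (π κ)⁻¹ * π (κ.eraseIdx j) := by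
        calc π ω * s k * (π ω)⁻¹ = (π κ)⁻¹ * (π κ * π ω * s k) * (π ω)⁻¹ := by group
          _ = _ := by rw [he]; group
      rw [ht]
      exact mul_mem (inv_mem hu)
        (cs.wordProd_mem_closure fun i hi => hκJ i (List.mem_of_mem_eraseIdx hi))
    refine cs.mem_of_mem_closure_of_length_eq_one hJ htJ ?_
    have := cs.length_mul_of_mem_minLeft hJ hwb.1 htJ
    rw [inv_mul_cancel_right] at this
    rcases cs.length_mul_simple (π ω) k with h' | h' <;> omega
  · rw [mul_assoc, mul_right_inj] at he
    have := hω.length_wordProd_eraseIdx_lt hj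
    rw [← he] at this
    omega

theorem conj_mem_closure_inter_of_mem_closure (hJ : J ⊆ Set.range cs.simple)
    (hK : K ⊆ Set.range cs.simple) {wb : W} (hwb : wb ∈ minLeft cs J ∩ minRight cs K) {x : W}
    (hx : x ∈ Subgroup.closure K) (hu : wb * x * wb⁻¹ ∈ Subgroup.closure J) :
    wb * x * wb⁻¹ ∈ Subgroup.closure (J ∩ (fun y => wb * y * wb⁻¹) '' K) := by
  refine cs.closure_induction_mul_simple hK (p := fun x => wb * x * wb⁻¹ ∈ Subgroup.closure J →
      wb * x * wb⁻¹ ∈ Subgroup.closure (J ∩ (fun y => wb * y * wb⁻¹) '' K))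
    (fun _ => by simp [one_mem]) (fun x hx k hk hlt ih hu => ?_) hx hu
  set u := wb * (x * s k) * wb⁻¹
  have hlen : ℓ (u * wb * s k) < ℓ (u * wb) := by
    rw [show u * wb * s k = wb * x by simp [u, mul_assoc], show u * wb = wb * (x * s k) by simp [u],
      cs.length_mul_of_mem_minRight hK hwb.2 hx,
      cs.length_mul_of_mem_minRight hK hwb.2 (mul_mem hx (Subgroup.subset_closure hk))]
    omega
  set t := wb * s k * wb⁻¹
  have ht : t ∈ J ∩ (fun y => wb * y * wb⁻¹) '' K :=
    ⟨cs.conj_simple_mem_of_length_mul_simple_lt hJ hwb hk hu hlen, s k, hk, rfl⟩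
  have hut : u * t = wb * x * wb⁻¹ := by simp [u, t, mul_assoc]
  have hut' : u * t ∈ Subgroup.closure (J ∩ (fun y => wb * y * wb⁻¹) '' K) := by
    rw [hut]
    exact ih (hut ▸ mul_mem hu (Subgroup.subset_closure ht.1))
  simpa [t, mul_assoc] using mul_mem hut' (Subgroup.subset_closure ht)

end Kilmoyer

end CoxeterSystem

theorem howlett_refined_general (cs : CoxeterSystem M W) (J K : Set W)
    (hJ : J ⊆ Set.range cs.simple) (hK : K ⊆ Set.range cs.simple)
    (wb : W) (hwb : wb ∈ minLeft cs J ∩ minRight cs K) (w : W)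
    (hw : ∃ b ∈ Subgroup.closure K, w = wb * b)
    (u v : W) (hu : u ∈ Subgroup.closure J) (hv : v ∈ Subgroup.closure K)
    (heq : w = u * wb * v) :
    u ∈ Subgroup.closure (J ∩ ((fun x => wb * x * wb⁻¹) '' K)) := by
  obtain ⟨b, hb, rfl⟩ := hw
  have hu' : u = wb * (b * v⁻¹) * wb⁻¹ := by
    rw [← mul_assoc, heq]; group
  rw [hu'] at hu ⊢
  exact cs.conj_mem_closure_inter_of_mem_closure hJ hK hwb (mul_mem hb (inv_mem hv)) hu

/-- Refinement of Howlett's lemma: for `w̄ ∈ ᴶW ∩ Wᴷ`, `K' = K ∩ w̄⁻¹ J w̄` and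
`J' = J ∩ w̄ K w̄⁻¹`, if `w ∈ w̄ W_K` then in the unique decomposition `w = u * w̄ * v`
with `u ∈ W_J` and `v ∈ W_K ∩ ᴷ'W` one has `u ∈ W_{J'}`. -/
theorem howlett_refined (cs : CoxeterSystem M W) (J K : Set W)
    (hJ : J ⊆ Set.range cs.simple) (hK : K ⊆ Set.range cs.simple)
    (wb : W) (hwb : wb ∈ minLeft cs J ∩ minRight cs K) (w : W)
    (hw : ∃ b ∈ Subgroup.closure K, w = wb * b)
    (u v : W) (hu : u ∈ Subgroup.closure J) (hv : v ∈ Subgroup.closure K)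
    (hv' : v ∈ minLeft cs (K ∩ ((fun x => wb⁻¹ * x * wb) '' J)))
    (heq : w = u * wb * v) :
    u ∈ Subgroup.closure (J ∩ ((fun x => wb * x * wb⁻¹) '' K)) :=
  howlett_refined_general cs J K hJ hK wb hwb w hw u v hu hv heq
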